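/- arXiv:2109.12222 — 2 statements merged into one kernel-verified Lean document; each statement's English description precedes it below -/
import Mathlib

section
/- For every x ∈ dom g ∩ dom φ_X, every y⋆ ∈ dom h⋆ ∩ dom φ_{Y⋆}, and every integer k ≥ 0, the iterates of the accelerated nonlinear PDHG method for smooth and strongly convex problems satisfy the descent rule L(x_{k+1}, y⋆) − L(x, y_{k+1}⋆) ≤ Δ_k(x, y⋆) − Δ_{k+1}(x, y⋆)/θ. -/
open Filter Topology

lemma convexOn_add_affine {E : Type*} [AddCommGroup E] [Module ℝ E] {C : Set E}
    {f : E → ℝ} (hf : ConvexOn ℝ C f) (ℓ : E → ℝ)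
    (hadd : ∀ a b, ℓ (a + b) = ℓ a + ℓ b)
    (hsmul : ∀ (t : ℝ) (a : E), ℓ (t • a) = t * ℓ a) (b : ℝ) :
    ConvexOn ℝ C (fun z => f z + (ℓ z + b)) := by
  refine ⟨hf.1, fun x hx y hy s t hs ht hst => ?_⟩
  have h2 := hf.2 hx hy hs ht hst
  have h3 : ℓ (s • x + t • y) = s * ℓ x + t * ℓ y := by rw [hadd, hsmul, hsmul]
  have h4 : s * b + t * b = b := by rw [← add_mul, hst, one_mul]
  simp only [smul_eq_mul] at h2 ⊢
  rw [h3]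
  linarith

lemma bregman_min {E : Type*} [AddCommGroup E] [Module ℝ E]
    (C : Set E) (F φ : E → ℝ) (c : ℝ)
    (hconv : ConvexOn ℝ C (fun z => F z - c * φ z))
    {z₀ : E} (hz₀ : z₀ ∈ C) {x : E} (hx : x ∈ C)
    (hmin : ∀ z ∈ C, F z₀ ≤ F z)
    {d : ℝ} (hd : HasDerivAt (fun t : ℝ => φ (z₀ + t • (x - z₀))) d 0) :
    F z₀ + c * (φ x - φ z₀ - d) ≤ F x := by
  set f : ℝ → ℝ := fun t => φ (z₀ + t • (x - z₀)) with hf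
  have hf0 : f 0 = φ z₀ := by simp [hf]
  have hkey : ∀ t ∈ Set.Ioo (0:ℝ) 1,
      F z₀ - F x ≤ c * ((f t - f 0) / t - (φ x - φ z₀)) := by
    intro t ht
    obtain ⟨ht0, ht1⟩ := ht
    have htne : t ≠ 0 := ht0.ne'
    have hmem : (1 - t) • z₀ + t • x ∈ C :=
      hconv.1 hz₀ hx (by linarith) ht0.le (by ring)
    have heq : z₀ + t • (x - z₀) = (1 - t) • z₀ + t • x := by module
    have h1 := hmin _ hmem
    have h2 := hconv.2 hz₀ hx (by linarith : (0:ℝ) ≤ 1 - t) ht0.le (by ring)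
    simp only [smul_eq_mul] at h2
    have hft : f t = φ ((1 - t) • z₀ + t • x) := by rw [hf]; simp only; rw [heq]
    have key2 : t * (F z₀ - F x) ≤ c * ((f t - f 0) - t * (φ x - φ z₀)) := by
      rw [hft, hf0]; linarith only [h1, h2]
    have h5 : c * ((f t - f 0) / t - (φ x - φ z₀)) =
        (c * ((f t - f 0) - t * (φ x - φ z₀))) / t := by
      field_simp
    rw [h5, le_div_iff₀ ht0]
    linarith only [key2]
  have hslope : Tendsto (fun t => (f t - f 0) / t) (𝓝[>] (0:ℝ)) (𝓝 d) := by
    have h := hasDerivAt_iff_tendsto_slope.mp hd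
    have h2 : Tendsto (slope f 0) (𝓝[>] (0:ℝ)) (𝓝 d) :=
      h.mono_left (nhdsWithin_mono _ (fun y hy => by simpa using ne_of_gt hy))
    have heq2 : (fun t => (f t - f 0) / t) = slope f 0 := by
      funext t; rw [slope_def_field]; ring
    rw [heq2]; exact h2
  have hlim : Tendsto (fun t => c * ((f t - f 0) / t - (φ x - φ z₀))) (𝓝[>] (0:ℝ))
      (𝓝 (c * (d - (φ x - φ z₀)))) := (hslope.sub_const _).const_mul c
  have hev : ∀ᶠ t in 𝓝[>] (0:ℝ), F z₀ - F x ≤ c * ((f t - f 0) / t - (φ x - φ z₀)) :=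
    eventually_of_mem (Ioo_mem_nhdsGT_of_mem ⟨le_refl 0, one_pos⟩) hkey
  have hfin := ge_of_tendsto hlim hev
  linarith

set_option maxHeartbeats 1000000 in
theorem const_descent_rule
    {X Y : Type*} [NormedAddCommGroup X] [NormedSpace ℝ X] [CompleteSpace X]
    [NormedAddCommGroup Y] [NormedSpace ℝ Y] [CompleteSpace Y]
    (A : X →L[ℝ] Y)
    (φX : X → ℝ) (SX : Set X) (gX : X → (X →L[ℝ] ℝ))
    (φY : (Y →L[ℝ] ℝ) → ℝ) (SY : Set (Y →L[ℝ] ℝ)) (gY : (Y →L[ℝ] ℝ) → Y)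
    (hSXne : SX.Nonempty) (hφXconv : ConvexOn ℝ SX φX)
    (hφXlsc : LowerSemicontinuousOn φX SX)
    (hSYne : SY.Nonempty) (hφYconv : ConvexOn ℝ SY φY)
    (hφYlsc : LowerSemicontinuousOn φY SY)
    (hφXdiff : ∀ x ∈ interior SX, ∀ w : X,
      HasDerivAt (fun t : ℝ => φX (x + t • w)) (gX x w) 0)
    (hφYdiff : ∀ p ∈ interior SY, ∀ q : Y →L[ℝ] ℝ,
      HasDerivAt (fun t : ℝ => φY (p + t • q)) (q (gY p)) 0)
    (DX : X → X → ℝ) (hDXdef : ∀ x x', DX x x' = φX x - φX x' - gX x' (x - x'))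
    (DY : (Y →L[ℝ] ℝ) → (Y →L[ℝ] ℝ) → ℝ)
    (hDYdef : ∀ p q, DY p q = φY p - φY q - (p - q) (gY q))
    (hscX : ∀ x ∈ SX, ∀ x' ∈ interior SX, (1/2) * ‖x - x'‖ ^ 2 ≤ DX x x')
    (hscY : ∀ p ∈ SY, ∀ q ∈ interior SY, (1/2) * ‖p - q‖ ^ 2 ≤ DY p q)
    (g : X → ℝ) (Sg : Set X) (hSgne : Sg.Nonempty)
    (hgconv : ConvexOn ℝ Sg g) (hglsc : LowerSemicontinuousOn g Sg)
    (hst : (Y →L[ℝ] ℝ) → ℝ) (Sh : Set (Y →L[ℝ] ℝ)) (hShne : Sh.Nonempty)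
    (hhconv : ConvexOn ℝ Sh hst) (hhlsc : LowerSemicontinuousOn hst Sh)
    (L : X → (Y →L[ℝ] ℝ) → ℝ) (hLdef : ∀ x p, L x p = g x + p (A x) - hst p)
    (γg γh : ℝ) (hγg : 0 < γg) (hγh : 0 < γh)
    (hA6 : ConvexOn ℝ (Sg ∩ SX) (fun x => g x - γg * φX x))
    (hA7 : ConvexOn ℝ (Sh ∩ SY) (fun p => hst p - γh * φY p))
    (hAne : A ≠ 0)
    (θ τ σ : ℝ)
    (hθdef : θ = 1 - (γg * γh / (2 * ‖A‖ ^ 2)) *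
      (Real.sqrt (1 + 4 * ‖A‖ ^ 2 / (γg * γh)) - 1))
    (hτdef : τ = (1 - θ) / (γg * θ)) (hσdef : σ = (1 - θ) / (γh * θ))
    (u : ℕ → X) (v : ℕ → (Y →L[ℝ] ℝ))
    (hu : ∀ k, u k ∈ Sg ∩ interior SX)
    (hv : ∀ k, v k ∈ Sh ∩ interior SY)
    (hstepx : ∀ k : ℕ, ∀ x ∈ Sg ∩ SX,
      g (u (k+1)) + (v k + θ • (v k - v (k-1))) (A (u (k+1))) + (1/τ) * DX (u (k+1)) (u k) ≤
        g x + (v k + θ • (v k - v (k-1))) (A x) + (1/τ) * DX x (u k))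
    (hstepy : ∀ k : ℕ, ∀ p ∈ Sh ∩ SY,
      -hst p + p (A (u (k+1))) - (1/σ) * DY p (v k) ≤
        -hst (v (k+1)) + (v (k+1)) (A (u (k+1))) - (1/σ) * DY (v (k+1)) (v k))
    (Δ : ℕ → X → (Y →L[ℝ] ℝ) → ℝ)
    (hΔdef : ∀ (k : ℕ) (x : X) (p : Y →L[ℝ] ℝ),
      Δ k x p = (1/τ) * DX x (u k) + (1/σ) * DY p (v k)
        + (θ/σ) * DY (v k) (v (k-1)) + θ * ((v k - v (k-1)) (A (x - u k))))
    :
    ∀ x ∈ Sg ∩ SX, ∀ p ∈ Sh ∩ SY, ∀ k : ℕ,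
      L (u (k+1)) p - L x (v (k+1)) ≤ Δ k x p - Δ (k+1) x p / θ := by
  intro x hx p hp k
  have hr : (0:ℝ) < ‖A‖ := norm_pos_iff.mpr hAne
  have hc : (0:ℝ) < γg * γh := mul_pos hγg hγh
  set s := Real.sqrt (1 + 4 * ‖A‖ ^ 2 / (γg * γh)) with hs
  have hq : (0:ℝ) < 4 * ‖A‖ ^ 2 / (γg * γh) := div_pos (by positivity) hc
  have hs2 : s ^ 2 = 1 + 4 * ‖A‖ ^ 2 / (γg * γh) := Real.sq_sqrt (by linarith)
  have hsnn : 0 ≤ s := Real.sqrt_nonneg _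
  have hs1 : 1 < s := by nlinarith only [hs2, hsnn, hq]
  have h1θ : 0 < 1 - θ := by
    rw [hθdef]
    have : 0 < (γg * γh / (2 * ‖A‖ ^ 2)) * (s - 1) :=
      mul_pos (by positivity) (by linarith)
    linarith
  have h1θeq : 1 - θ = γg * γh / (2 * ‖A‖ ^ 2) * (s - 1) := by rw [hθdef]; ring
  have keyid : ‖A‖ ^ 2 * (1 - θ) ^ 2 = γg * γh * θ := by
    have hθeq : θ = 1 - γg * γh / (2 * ‖A‖ ^ 2) * (s - 1) := by rw [hθdef]
    have hs2' : s ^ 2 * (γg * γh) = γg * γh + 4 * ‖A‖ ^ 2 := by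
      field_simp at hs2; linarith
    rw [hθeq]
    field_simp
    linear_combination (γg*γh) * hs2'
  have hθ0 : 0 < θ := by
    have h1 : 0 < ‖A‖ ^ 2 * (1 - θ) ^ 2 := by positivity
    nlinarith only [h1, keyid, hc]
  have hτ0 : 0 < τ := by rw [hτdef]; exact div_pos h1θ (mul_pos hγg hθ0)
  have hσ0 : 0 < σ := by rw [hσdef]; exact div_pos h1θ (mul_pos hγh hθ0)
  have hτθ : 1/τ/θ = γg + 1/τ := by
    rw [hτdef]; field_simp; ring
  have hσθ : 1/σ/θ = γh + 1/σ := by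
    rw [hσdef]; field_simp; ring
  have hθσθ : θ/σ/θ = 1/σ := by
    field_simp [hθ0.ne']
  -- Step-x inequality (I)
  have hdX := hφXdiff (u (k+1)) (hu (k+1)).2 (x - u (k+1))
  have hFconv : ConvexOn ℝ (Sg ∩ SX)
      (fun z => (g z + (v k + θ • (v k - v (k-1))) (A z) + (1/τ) * DX z (u k))
        - (γg + 1/τ) * φX z) := by
    have heq : (fun z => (g z + (v k + θ • (v k - v (k-1))) (A z) + (1/τ) * DX z (u k))
          - (γg + 1/τ) * φX z)
        = (fun z => (g z - γg * φX z) +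
            (((v k + θ • (v k - v (k-1))) (A z) - (1/τ) * (gX (u k)) z)
            + ((1/τ) * (gX (u k)) (u k) - (1/τ) * φX (u k)))) := by
      funext z; rw [hDXdef]; simp only [map_sub]; ring
    rw [heq]
    exact convexOn_add_affine hA6 _
      (fun a b => by simp only [map_add]; ring)
      (fun t a => by simp only [map_smul, smul_eq_mul]; ring) _
  have hI := bregman_min (Sg ∩ SX)
      (fun z => g z + (v k + θ • (v k - v (k-1))) (A z) + (1/τ) * DX z (u k))
      φX (γg + 1/τ) hFconv
      (⟨(hu (k+1)).1, interior_subset (hu (k+1)).2⟩ : u (k+1) ∈ Sg ∩ SX) hx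
      (fun z hz => hstepx k z hz) hdX
  rw [← hDXdef x (u (k+1))] at hI
  -- Step-y inequality (II)
  have hdY := hφYdiff (v (k+1)) (hv (k+1)).2 (p - v (k+1))
  have hHconv : ConvexOn ℝ (Sh ∩ SY)
      (fun q => (hst q - q (A (u (k+1))) + (1/σ) * DY q (v k)) - (γh + 1/σ) * φY q) := by
    have heq : (fun q : Y →L[ℝ] ℝ =>
          (hst q - q (A (u (k+1))) + (1/σ) * DY q (v k)) - (γh + 1/σ) * φY q)
        = (fun q => (hst q - γh * φY q) +
            ((-(q (A (u (k+1)))) - (1/σ) * (q (gY (v k))))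
            + ((1/σ) * ((v k) (gY (v k))) - (1/σ) * φY (v k)))) := by
      funext q; rw [hDYdef]; simp only [ContinuousLinearMap.sub_apply]; ring
    rw [heq]
    exact convexOn_add_affine hA7 _
      (fun a b => by simp only [ContinuousLinearMap.add_apply]; ring)
      (fun t a => by simp only [ContinuousLinearMap.smul_apply, smul_eq_mul]; ring) _
  have hminY : ∀ q ∈ Sh ∩ SY,
      (hst (v (k+1)) - (v (k+1)) (A (u (k+1))) + (1/σ) * DY (v (k+1)) (v k)) ≤
        hst q - q (A (u (k+1))) + (1/σ) * DY q (v k) := by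
    intro q hq
    have := hstepy k q hq
    linarith
  have hII := bregman_min (Sh ∩ SY)
      (fun q => hst q - q (A (u (k+1))) + (1/σ) * DY q (v k))
      φY (γh + 1/σ) hHconv
      (⟨(hv (k+1)).1, interior_subset (hv (k+1)).2⟩ : v (k+1) ∈ Sh ∩ SY) hp
      hminY hdY
  rw [← hDYdef p (v (k+1))] at hII
  -- residual inequality (III)
  have hDXl := hscX (u (k+1)) (interior_subset (hu (k+1)).2) (u k) (hu k).2
  have hDYl := hscY (v k) (interior_subset (hv k).2) (v (k-1)) (hv (k-1)).2
  have hEb : ‖(v k - v (k-1)) (A (u (k+1) - u k))‖ ≤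
      ‖v k - v (k-1)‖ * (‖A‖ * ‖u (k+1) - u k‖) :=
    le_trans ((v k - v (k-1)).le_opNorm _)
      (mul_le_mul_of_nonneg_left (A.le_opNorm _) (norm_nonneg _))
  have hE : -(‖v k - v (k-1)‖ * (‖A‖ * ‖u (k+1) - u k‖)) ≤
      (v k - v (k-1)) (A (u (k+1) - u k)) := by
    have h := neg_abs_le ((v k - v (k-1)) (A (u (k+1) - u k)))
    rw [Real.norm_eq_abs] at hEb
    linarith
  have hIII : 0 ≤ (1/τ) * DX (u (k+1)) (u k) + (θ/σ) * DY (v k) (v (k-1))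
      + θ * ((v k - v (k-1)) (A (u (k+1) - u k))) := by
    set a := ‖u (k+1) - u k‖ with ha
    set b := ‖v k - v (k-1)‖ with hb
    set E := (v k - v (k-1)) (A (u (k+1) - u k)) with hEdef
    have han : 0 ≤ a := norm_nonneg _
    have hbn : 0 ≤ b := norm_nonneg _
    have hsq : 0 ≤ (γg * a - (1-θ) * ‖A‖ * b) ^ 2 := sq_nonneg _
    have expand : (γg * a - (1-θ) * ‖A‖ * b) ^ 2 =
        γg^2 * a^2 - 2 * γg * (1-θ) * ‖A‖ * a * b + (‖A‖^2 * (1-θ)^2) * b^2 := by ring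
    rw [keyid] at expand
    rw [expand] at hsq
    have base2 : 0 ≤ γg * a^2/2 + γh * θ * b^2/2 - (1-θ) * ‖A‖ * a * b := by
      have hmul : γg * 0 ≤ γg * (γg * a^2/2 + γh * θ * b^2/2 - (1-θ) * ‖A‖ * a * b) := by
        linarith only [hsq]
      exact le_of_mul_le_mul_left (by linarith [hmul]) hγg
    have t1 : 0 ≤ γg * θ * (DX (u (k+1)) (u k) - a^2/2) :=
      mul_nonneg (mul_nonneg hγg.le hθ0.le) (by linarith)
    have t2 : 0 ≤ γh * θ^2 * (DY (v k) (v (k-1)) - b^2/2) :=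
      mul_nonneg (mul_nonneg hγh.le (by positivity)) (by linarith)
    have t3 : 0 ≤ (1-θ) * θ * (E + b * (‖A‖ * a)) :=
      mul_nonneg (mul_nonneg h1θ.le hθ0.le) (by linarith)
    have t4 : 0 ≤ θ * (γg * a^2/2 + γh * θ * b^2/2 - (1-θ) * ‖A‖ * a * b) :=
      mul_nonneg hθ0.le base2
    have H : 0 ≤ γg * θ * DX (u (k+1)) (u k) + γh * θ^2 * DY (v k) (v (k-1))
        + (1-θ) * θ * E := by linarith only [t1, t2, t3, t4]
    have hτe : 1/τ = γg * θ / (1-θ) := by rw [hτdef]; field_simp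
    have hσe : θ/σ = γh * θ^2 / (1-θ) := by rw [hσdef]; field_simp
    rw [hτe, hσe]
    have heq3 : γg * θ / (1-θ) * DX (u (k+1)) (u k) + γh * θ^2 / (1-θ) * DY (v k) (v (k-1))
        + θ * E = (γg * θ * DX (u (k+1)) (u k) + γh * θ^2 * DY (v k) (v (k-1))
        + (1-θ) * θ * E) / (1-θ) := by
      field_simp
    rw [heq3]
    exact div_nonneg H h1θ.le
  -- final assembly
  rw [hLdef, hLdef, hΔdef, hΔdef]
  simp only [Nat.add_sub_cancel]
  have hdiv : ((1/τ) * DX x (u (k+1)) + (1/σ) * DY p (v (k+1)) + (θ/σ) * DY (v (k+1)) (v k)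
      + θ * ((v (k+1) - v k) (A (x - u (k+1))))) / θ
      = (γg + 1/τ) * DX x (u (k+1)) + (γh + 1/σ) * DY p (v (k+1))
        + (1/σ) * DY (v (k+1)) (v k) + ((v (k+1) - v k) (A (x - u (k+1)))) := by
    rw [add_div, add_div, add_div, mul_div_right_comm, mul_div_right_comm,
      mul_div_right_comm, mul_div_right_comm, hτθ, hσθ, hθσθ, div_self hθ0.ne', one_mul]
  rw [hdiv]
  simp only [map_sub, map_add, map_smul, ContinuousLinearMap.add_apply,
    ContinuousLinearMap.sub_apply, ContinuousLinearMap.smul_apply, smul_eq_mul] at hI hII hIII ⊢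
  linarith only [hI, hII, hIII]
end

section
/- For K ≥ 1, define T_K = Σ_{k=1}^{K} θ^{−(k−1)} = (1 − θ^K)/((1 − θ)·θ^{K−1}) and the weighted averages X_K = (1/T_K)·Σ_{k=1}^{K} θ^{−(k−1)}·x_k and Y_K⋆ = (1/T_K)·Σ_{k=1}^{K} θ^{−(k−1)}·y_k⋆. Then for every x ∈ dom g ∩ dom φ_X and y⋆ ∈ dom h⋆ ∩ dom φ_{Y⋆}, the iterates of the accelerated nonlinear PDHG method for smooth and strongly convex problems satisfy T_K·(L(X_K, y⋆) − L(x, Y_K⋆)) ≤ Δ_0(x, y⋆) − Δ_K(x, y⋆)/θ^K; moreover, if (x_s, y_s⋆) ∈ (dom g ∩ dom φ_X) × (dom h⋆ ∩ dom φ_{Y⋆}) is a saddle point of L, then (1/σ)·D_Y(y_s⋆, y_K⋆) ≤ Δ_K(x_s, y_s⋆) ≤ θ^K·Δ_0(x_s, y_s⋆). -/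
open Filter Topology
open Filter Topology

-- Young's inequality with product condition
lemma young_ineq {α β γ a b : ℝ} (hα : 0 < α) (hγ : 0 ≤ γ) (hprod : γ^2 = α * β) :
    2 * γ * a * b ≤ α * a^2 + β * b^2 := by
  nlinarith [sq_nonneg (γ * b - α * a), sq_nonneg a, sq_nonneg b]

-- strengthened prox inequality from minimality
lemma prox_strengthen {E : Type*} [NormedAddCommGroup E] [NormedSpace ℝ E]
    {S : Set E} (hS : Convex ℝ S) {ψ φ : E → ℝ} {μ : ℝ} (hμ : 0 ≤ μ)
    (hψ : ConvexOn ℝ S ψ) {z x : E} (hz : z ∈ S) (hx : x ∈ S)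
    {d : ℝ} (hd : HasDerivAt (fun t : ℝ => φ (z + t • (x - z))) d 0)
    (hmin : ∀ w ∈ S, ψ z + μ * φ z ≤ ψ w + μ * φ w) :
    ψ z ≤ ψ x + μ * d := by
  set q : ℝ → ℝ := fun t => φ (z + t • (x - z)) with hq
  have key : ∀ lam : ℝ, lam ∈ Set.Ioc (0:ℝ) 1 → ψ z ≤ ψ x + μ * ((q lam - q 0) / lam) := by
    intro l hl
    obtain ⟨hl0, hl1⟩ := hl
    have hmem : z + l • (x - z) ∈ S := by
      have := hS hz hx (by linarith : (0:ℝ) ≤ 1 - l) hl0.le (by ring)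
      convert this using 1
      module
    have h1 := hmin _ hmem
    have h2 := hψ.2 hz hx (by linarith : (0:ℝ) ≤ 1 - l) hl0.le (by ring)
    have h2' : ψ (z + l • (x - z)) ≤ (1 - l) * ψ z + l * ψ x := by
      have e : z + l • (x - z) = (1 - l) • z + l • x := by module
      rw [e]; simpa [smul_eq_mul] using h2
    have hq0 : q 0 = φ z := by simp [hq]
    have : l * ψ z ≤ l * ψ x + μ * (q l - q 0) := by
      simp only [hq, hq0] at *
      nlinarith
    have h3 : ψ z ≤ (l * ψ x + μ * (q l - q 0)) / l := by
      rw [le_div_iff₀ hl0]; linarith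
    have h4 : (l * ψ x + μ * (q l - q 0)) / l = ψ x + μ * ((q l - q 0) / l) := by
      field_simp
    linarith [h3, h4.le, h4.ge]
  have htend : Tendsto (fun l : ℝ => ψ x + μ * ((q l - q 0) / l)) (𝓝[>] 0) (𝓝 (ψ x + μ * d)) := by
    have hs : Tendsto (slope q 0) (𝓝[≠] 0) (𝓝 d) := hasDerivAt_iff_tendsto_slope.mp hd
    have hs' : Tendsto (slope q 0) (𝓝[>] 0) (𝓝 d) :=
      hs.mono_left (nhdsWithin_mono _ (fun y hy => ne_of_gt hy))
    have : Tendsto (fun l : ℝ => (q l - q 0) / l) (𝓝[>] 0) (𝓝 d) := by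
      refine hs'.congr (fun l => ?_)
      simp [slope, sub_zero, div_eq_inv_mul, vsub_eq_sub]
    exact (tendsto_const_nhds.add (this.const_mul μ))
  refine ge_of_tendsto htend ?_
  filter_upwards [Ioc_mem_nhdsGT_of_mem ⟨le_refl (0:ℝ), zero_lt_one⟩] with l hl
  exact key l hl

-- affine functions are convex
lemma convexOn_affine {E : Type*} [NormedAddCommGroup E] [NormedSpace ℝ E]
    {S : Set E} (hS : Convex ℝ S) (f : E → ℝ)
    (hadd : ∀ x y, f (x + y) = f x + f y)
    (hsmul : ∀ (a : ℝ) x, f (a • x) = a * f x) (c : ℝ) :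
    ConvexOn ℝ S (fun w => f w + c) := by
  refine ⟨hS, fun x hx y hy a b ha hb hab => le_of_eq ?_⟩
  simp only [smul_eq_mul, hadd, hsmul]
  linear_combination (-c) * hab

lemma theta_facts {γg γh N θ τ σ : ℝ} (hγg : 0 < γg) (hγh : 0 < γh) (hN : 0 < N)
    (hθdef : θ = 1 - (γg * γh / (2 * N)) * (Real.sqrt (1 + 4 * N / (γg * γh)) - 1))
    (hτdef : τ = (1 - θ) / (γg * θ)) (hσdef : σ = (1 - θ) / (γh * θ)) :
    0 < θ ∧ θ < 1 ∧ 0 < τ ∧ 0 < σ ∧ θ * (1/τ + γg) = 1/τ ∧ θ * (1/σ + γh) = 1/σ ∧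
      θ^2 * N = (1/τ) * (θ/σ) := by
  set c : ℝ := γg * γh / (2 * N) with hc_def
  have hc : 0 < c := by positivity
  set s : ℝ := Real.sqrt (1 + 4 * N / (γg * γh)) with hs_def
  have hpos : (0:ℝ) ≤ 1 + 4 * N / (γg * γh) := by positivity
  have hs2 : s ^ 2 = 1 + 4 * N / (γg * γh) := Real.sq_sqrt hpos
  have hfrac : 0 < 4 * N / (γg * γh) := by positivity
  have hs1 : 1 < s := by nlinarith [Real.sqrt_nonneg (1 + 4 * N / (γg * γh))]
  have h1θ : 1 - θ = c * (s - 1) := by rw [hθdef]; ring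
  have h1θpos : 0 < 1 - θ := by
    rw [h1θ]; exact mul_pos hc (by linarith)
  have hs2c : c * s ^ 2 = c + 2 := by
    rw [hs2, hc_def]; field_simp; ring
  have hkey : (1 - θ) ^ 2 = 2 * c * θ := by
    rw [hθdef]; linear_combination c * hs2c
  have hθpos : 0 < θ := by nlinarith
  have hθ1 : θ < 1 := by linarith
  have hτpos : 0 < τ := by rw [hτdef]; positivity
  have hσpos : 0 < σ := by rw [hσdef]; positivity
  have hθne : θ ≠ 0 := ne_of_gt hθpos
  have h1θne : (1:ℝ) - θ ≠ 0 := ne_of_gt h1θpos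
  have hγgne : γg ≠ 0 := ne_of_gt hγg
  have hγhne : γh ≠ 0 := ne_of_gt hγh
  have hc2 : 2 * c * N = γg * γh := by rw [hc_def]; field_simp
  have hNkey : N * (1 - θ) ^ 2 = γg * γh * θ := by linear_combination N * hkey + θ * hc2
  refine ⟨hθpos, hθ1, hτpos, hσpos, ?_, ?_, ?_⟩
  · rw [hτdef]; field_simp; ring
  · rw [hσdef]; field_simp; ring
  · rw [hτdef, hσdef]; field_simp; linear_combination hNkey

-- strengthened prox inequality, objective form
lemma prox_strengthen' {E : Type*} [NormedAddCommGroup E] [NormedSpace ℝ E]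
    {S : Set E} (hS : Convex ℝ S) (F φ : E → ℝ) {μ : ℝ} (hμ : 0 ≤ μ)
    (hψ : ConvexOn ℝ S (fun w => F w - μ * φ w)) {z x : E} (hz : z ∈ S) (hx : x ∈ S)
    {d : ℝ} (hd : HasDerivAt (fun t : ℝ => φ (z + t • (x - z))) d 0)
    (hmin : ∀ w ∈ S, F z ≤ F w) :
    F z + μ * (φ x - φ z - d) ≤ F x := by
  have hmin' : ∀ w ∈ S, (fun w => F w - μ * φ w) z + μ * φ z ≤ (fun w => F w - μ * φ w) w + μ * φ w := by
    intro w hw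
    show F z - μ * φ z + μ * φ z ≤ F w - μ * φ w + μ * φ w
    have := hmin w hw; linarith
  have hps := prox_strengthen hS hμ hψ hz hx hd hmin'
  have hps' : F z - μ * φ z ≤ F x - μ * φ x + μ * d := hps
  linarith

set_option maxHeartbeats 2000000 in
theorem const_rate_and_bound
    {X Y : Type*} [NormedAddCommGroup X] [NormedSpace ℝ X] [CompleteSpace X]
    [NormedAddCommGroup Y] [NormedSpace ℝ Y] [CompleteSpace Y]
    (A : X →L[ℝ] Y)
    (φX : X → ℝ) (SX : Set X) (gX : X → (X →L[ℝ] ℝ))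
    (φY : (Y →L[ℝ] ℝ) → ℝ) (SY : Set (Y →L[ℝ] ℝ)) (gY : (Y →L[ℝ] ℝ) → Y)
    (hSXne : SX.Nonempty) (hφXconv : ConvexOn ℝ SX φX)
    (hφXlsc : LowerSemicontinuousOn φX SX)
    (hSYne : SY.Nonempty) (hφYconv : ConvexOn ℝ SY φY)
    (hφYlsc : LowerSemicontinuousOn φY SY)
    (hφXdiff : ∀ x ∈ interior SX, ∀ w : X,
      HasDerivAt (fun t : ℝ => φX (x + t • w)) (gX x w) 0)
    (hφYdiff : ∀ p ∈ interior SY, ∀ q : Y →L[ℝ] ℝ,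
      HasDerivAt (fun t : ℝ => φY (p + t • q)) (q (gY p)) 0)
    (DX : X → X → ℝ) (hDXdef : ∀ x x', DX x x' = φX x - φX x' - gX x' (x - x'))
    (DY : (Y →L[ℝ] ℝ) → (Y →L[ℝ] ℝ) → ℝ)
    (hDYdef : ∀ p q, DY p q = φY p - φY q - (p - q) (gY q))
    (hscX : ∀ x ∈ SX, ∀ x' ∈ interior SX, (1/2) * ‖x - x'‖ ^ 2 ≤ DX x x')
    (hscY : ∀ p ∈ SY, ∀ q ∈ interior SY, (1/2) * ‖p - q‖ ^ 2 ≤ DY p q)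
    (g : X → ℝ) (Sg : Set X) (hSgne : Sg.Nonempty)
    (hgconv : ConvexOn ℝ Sg g) (hglsc : LowerSemicontinuousOn g Sg)
    (hst : (Y →L[ℝ] ℝ) → ℝ) (Sh : Set (Y →L[ℝ] ℝ)) (hShne : Sh.Nonempty)
    (hhconv : ConvexOn ℝ Sh hst) (hhlsc : LowerSemicontinuousOn hst Sh)
    (L : X → (Y →L[ℝ] ℝ) → ℝ) (hLdef : ∀ x p, L x p = g x + p (A x) - hst p)
    (γg γh : ℝ) (hγg : 0 < γg) (hγh : 0 < γh)
    (hA6 : ConvexOn ℝ (Sg ∩ SX) (fun x => g x - γg * φX x))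
    (hA7 : ConvexOn ℝ (Sh ∩ SY) (fun p => hst p - γh * φY p))
    (hAne : A ≠ 0)
    (θ τ σ : ℝ)
    (hθdef : θ = 1 - (γg * γh / (2 * ‖A‖ ^ 2)) *
      (Real.sqrt (1 + 4 * ‖A‖ ^ 2 / (γg * γh)) - 1))
    (hτdef : τ = (1 - θ) / (γg * θ)) (hσdef : σ = (1 - θ) / (γh * θ))
    (u : ℕ → X) (v : ℕ → (Y →L[ℝ] ℝ))
    (hu : ∀ k, u k ∈ Sg ∩ interior SX)
    (hv : ∀ k, v k ∈ Sh ∩ interior SY)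
    (hstepx : ∀ k : ℕ, ∀ x ∈ Sg ∩ SX,
      g (u (k+1)) + (v k + θ • (v k - v (k-1))) (A (u (k+1))) + (1/τ) * DX (u (k+1)) (u k) ≤
        g x + (v k + θ • (v k - v (k-1))) (A x) + (1/τ) * DX x (u k))
    (hstepy : ∀ k : ℕ, ∀ p ∈ Sh ∩ SY,
      -hst p + p (A (u (k+1))) - (1/σ) * DY p (v k) ≤
        -hst (v (k+1)) + (v (k+1)) (A (u (k+1))) - (1/σ) * DY (v (k+1)) (v k))
    (Δ : ℕ → X → (Y →L[ℝ] ℝ) → ℝ)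
    (hΔdef : ∀ (k : ℕ) (x : X) (p : Y →L[ℝ] ℝ),
      Δ k x p = (1/τ) * DX x (u k) + (1/σ) * DY p (v k)
        + (θ/σ) * DY (v k) (v (k-1)) + θ * ((v k - v (k-1)) (A (x - u k))))
    (xs : X) (ys : Y →L[ℝ] ℝ) (hxs : xs ∈ Sg ∩ SX) (hys : ys ∈ Sh ∩ SY)
    (hsaddle1 : ∀ p ∈ Sh, L xs p ≤ L xs ys)
    (hsaddle2 : ∀ x ∈ Sg, L xs ys ≤ L x ys)
    (T : ℕ → ℝ) (hT : ∀ K : ℕ, T K = ∑ k ∈ Finset.Icc 1 K, (θ ^ (k-1))⁻¹)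
    (XK : ℕ → X) (YK : ℕ → (Y →L[ℝ] ℝ))
    (hXK : ∀ K : ℕ, XK K = (T K)⁻¹ • ∑ k ∈ Finset.Icc 1 K, (θ ^ (k-1))⁻¹ • u k)
    (hYK : ∀ K : ℕ, YK K = (T K)⁻¹ • ∑ k ∈ Finset.Icc 1 K, (θ ^ (k-1))⁻¹ • v k) :
    ∀ K : ℕ, 1 ≤ K →
      T K = (1 - θ ^ K) / ((1 - θ) * θ ^ (K - 1)) ∧
      (∀ x ∈ Sg ∩ SX, ∀ p ∈ Sh ∩ SY,
        T K * (L (XK K) p - L x (YK K)) ≤ Δ 0 x p - Δ K x p / θ ^ K) ∧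
      ((1/σ) * DY ys (v K) ≤ Δ K xs ys ∧ Δ K xs ys ≤ θ ^ K * Δ 0 xs ys) := by
  have hAnorm : 0 < ‖A‖ := norm_pos_iff.mpr hAne
  have hN2 : (0:ℝ) < ‖A‖ ^ 2 := by positivity
  obtain ⟨hθpos, hθ1, hτpos, hσpos, hθτ, hθσ, hcrs⟩ :=
    theta_facts hγg hγh hN2 hθdef hτdef hσdef
  have hθne : θ ≠ 0 := ne_of_gt hθpos
  have hSgSX : Convex ℝ (Sg ∩ SX) := hA6.1
  have hShSY : Convex ℝ (Sh ∩ SY) := hA7.1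
  have huS : ∀ k, u k ∈ Sg ∩ SX := fun k => ⟨(hu k).1, interior_subset (hu k).2⟩
  have hvS : ∀ k, v k ∈ Sh ∩ SY := fun k => ⟨(hv k).1, interior_subset (hv k).2⟩
  -- strengthened x-step
  have hS1 : ∀ k : ℕ, ∀ x ∈ Sg ∩ SX,
      g (u (k+1)) + (v k + θ • (v k - v (k-1))) (A (u (k+1))) + (1/τ) * DX (u (k+1)) (u k)
        + (1/τ + γg) * DX x (u (k+1))
        ≤ g x + (v k + θ • (v k - v (k-1))) (A x) + (1/τ) * DX x (u k) := by
    intro k x hx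
    have hμ0 : (0:ℝ) ≤ 1/τ + γg := by positivity
    have hfe : (fun w => (g w + (v k + θ • (v k - v (k-1))) (A w) + (1/τ) * DX w (u k))
          - (1/τ + γg) * φX w)
        = (fun w => (g w - γg * φX w) + (((v k + θ • (v k - v (k-1))) (A w)
          - (1/τ) * (gX (u k) w)) + ((1/τ) * (gX (u k) (u k)) - (1/τ) * φX (u k)))) := by
      funext w; rw [hDXdef, map_sub]; ring
    have hψconv : ConvexOn ℝ (Sg ∩ SX)
        (fun w => (g w + (v k + θ • (v k - v (k-1))) (A w) + (1/τ) * DX w (u k))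
          - (1/τ + γg) * φX w) := by
      rw [hfe]
      exact hA6.add (convexOn_affine hSgSX _
        (fun a b => by simp only [map_add]; ring)
        (fun a w => by simp only [map_smul, smul_eq_mul]; ring) _)
    have hps := prox_strengthen' hSgSX
      (fun w => g w + (v k + θ • (v k - v (k-1))) (A w) + (1/τ) * DX w (u k)) φX hμ0
      hψconv (huS (k+1)) hx (hφXdiff (u (k+1)) (hu (k+1)).2 (x - u (k+1)))
      (fun w hw => hstepx k w hw)
    have hps' : (g (u (k+1)) + (v k + θ • (v k - v (k-1))) (A (u (k+1)))
          + (1/τ) * DX (u (k+1)) (u k))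
        + (1/τ + γg) * (φX x - φX (u (k+1)) - gX (u (k+1)) (x - u (k+1)))
        ≤ g x + (v k + θ • (v k - v (k-1))) (A x) + (1/τ) * DX x (u k) := hps
    rw [hDXdef x (u (k+1))]
    linarith
  -- strengthened y-step
  have hS2 : ∀ k : ℕ, ∀ p ∈ Sh ∩ SY,
      hst (v (k+1)) - (v (k+1)) (A (u (k+1))) + (1/σ) * DY (v (k+1)) (v k)
        + (1/σ + γh) * DY p (v (k+1))
        ≤ hst p - p (A (u (k+1))) + (1/σ) * DY p (v k) := by
    intro k p hp
    have hμ0 : (0:ℝ) ≤ 1/σ + γh := by positivity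
    have hfe : (fun q => (hst q - q (A (u (k+1))) + (1/σ) * DY q (v k)) - (1/σ + γh) * φY q)
        = (fun q => (hst q - γh * φY q) + ((-(q (A (u (k+1))))
          - (1/σ) * (q (gY (v k)))) + ((1/σ) * ((v k) (gY (v k))) - (1/σ) * φY (v k)))) := by
      funext q; rw [hDYdef, ContinuousLinearMap.sub_apply]; ring
    have hψconv : ConvexOn ℝ (Sh ∩ SY)
        (fun q => (hst q - q (A (u (k+1))) + (1/σ) * DY q (v k)) - (1/σ + γh) * φY q) := by
      rw [hfe]
      exact hA7.add (convexOn_affine hShSY _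
        (fun a b => by simp only [ContinuousLinearMap.add_apply]; ring)
        (fun a q => by simp only [ContinuousLinearMap.coe_smul', Pi.smul_apply,
          smul_eq_mul]; ring) _)
    have hps := prox_strengthen' hShSY
      (fun q => hst q - q (A (u (k+1))) + (1/σ) * DY q (v k)) φY hμ0
      hψconv (hvS (k+1)) hp (hφYdiff (v (k+1)) (hv (k+1)).2 (p - v (k+1)))
      (fun q hq => by have := hstepy k q hq; linarith)
    have hps' : (hst (v (k+1)) - (v (k+1)) (A (u (k+1))) + (1/σ) * DY (v (k+1)) (v k))
        + (1/σ + γh) * (φY p - φY (v (k+1)) - (p - v (k+1)) (gY (v (k+1))))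
        ≤ hst p - p (A (u (k+1))) + (1/σ) * DY p (v k) := hps
    rw [hDYdef p (v (k+1))]
    linarith
  -- cross-term bound
  have hcb : ∀ k : ℕ, θ * ((v k - v (k-1)) (A (u k) - A (u (k+1))))
      ≤ (1/τ) * DX (u (k+1)) (u k) + (θ/σ) * DY (v k) (v (k-1)) := by
    intro k
    have hq0 : (v k - v (k-1)) (A (u k) - A (u (k+1)))
        ≤ ‖(v k - v (k-1)) (A (u k) - A (u (k+1)))‖ := by
      rw [Real.norm_eq_abs]; exact le_abs_self _
    have hq1 := (v k - v (k-1)).le_opNorm (A (u k) - A (u (k+1)))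
    have hq2 : ‖A (u k) - A (u (k+1))‖ ≤ ‖A‖ * ‖u k - u (k+1)‖ := by
      rw [← map_sub]; exact A.le_opNorm _
    have hq3 : (v k - v (k-1)) (A (u k) - A (u (k+1)))
        ≤ ‖v k - v (k-1)‖ * (‖A‖ * ‖u k - u (k+1)‖) := by
      have := mul_le_mul_of_nonneg_left hq2 (norm_nonneg (v k - v (k-1)))
      linarith
    have hsx := hscX (u (k+1)) ((huS (k+1)).2) (u k) (hu k).2
    rw [norm_sub_rev] at hsx
    have hsy := hscY (v k) ((hvS k).2) (v (k-1)) (hv (k-1)).2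
    have hy := young_ineq (a := ‖u k - u (k+1)‖) (b := ‖v k - v (k-1)‖)
      (show (0:ℝ) < 1/τ by positivity) (show (0:ℝ) ≤ θ * ‖A‖ by positivity)
      (show (θ * ‖A‖)^2 = (1/τ) * (θ/σ) by rw [mul_pow]; linarith [hcrs])
    have h5 := mul_le_mul_of_nonneg_left hq3 hθpos.le
    have h6 := mul_le_mul_of_nonneg_left hsx (show (0:ℝ) ≤ 1/τ by positivity)
    have h7 := mul_le_mul_of_nonneg_left hsy (show (0:ℝ) ≤ θ/σ by positivity)
    nlinarith [h5, h6, h7, hy]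
  -- one-step estimate (θ-scaled)
  have hstep : ∀ k : ℕ, ∀ x ∈ Sg ∩ SX, ∀ p ∈ Sh ∩ SY,
      θ * (L (u (k+1)) p - L x (v (k+1))) ≤ θ * Δ k x p - Δ (k+1) x p := by
    intro k x hx p hp
    have s1θ := mul_le_mul_of_nonneg_left (hS1 k x hx) hθpos.le
    have s2θ := mul_le_mul_of_nonneg_left (hS2 k p hp) hθpos.le
    have hcbθ := mul_le_mul_of_nonneg_left (hcb k) hθpos.le
    have e1 : θ * ((1/τ + γg) * DX x (u (k+1))) = (1/τ) * DX x (u (k+1)) := by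
      rw [← mul_assoc, hθτ]
    have e2 : θ * ((1/σ + γh) * DY p (v (k+1))) = (1/σ) * DY p (v (k+1)) := by
      rw [← mul_assoc, hθσ]
    rw [hLdef, hLdef, hΔdef, hΔdef]
    simp only [ContinuousLinearMap.add_apply, ContinuousLinearMap.sub_apply,
      ContinuousLinearMap.coe_smul', Pi.smul_apply, smul_eq_mul, map_sub,
      Nat.add_sub_cancel] at s1θ s2θ hcbθ ⊢
    ring_nf at s1θ s2θ hcbθ e1 e2 ⊢
    linarith [s1θ, s2θ, hcbθ, e1, e2]
  -- telescoped sum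
  have hsum : ∀ x ∈ Sg ∩ SX, ∀ p ∈ Sh ∩ SY, ∀ K : ℕ,
      ∑ k ∈ Finset.range K, (θ ^ k)⁻¹ * (L (u (k+1)) p - L x (v (k+1)))
        ≤ Δ 0 x p - (θ ^ K)⁻¹ * Δ K x p := by
    intro x hx p hp K
    have hterm : ∀ k ∈ Finset.range K,
        (θ ^ k)⁻¹ * (L (u (k+1)) p - L x (v (k+1)))
          ≤ (θ ^ k)⁻¹ * Δ k x p - (θ ^ (k+1))⁻¹ * Δ (k+1) x p := by
      intro k _
      have h := mul_le_mul_of_nonneg_left (hstep k x hx p hp)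
        (inv_pos.mpr (pow_pos hθpos (k+1))).le
      have ea : (θ ^ (k+1))⁻¹ * (θ * (L (u (k+1)) p - L x (v (k+1))))
          = (θ ^ k)⁻¹ * (L (u (k+1)) p - L x (v (k+1))) := by
        rw [pow_succ]; field_simp
      have eb : (θ ^ (k+1))⁻¹ * (θ * Δ k x p) = (θ ^ k)⁻¹ * Δ k x p := by
        rw [pow_succ]; field_simp
      ring_nf at h ea eb ⊢
      linarith [h, ea, eb]
    calc ∑ k ∈ Finset.range K, (θ ^ k)⁻¹ * (L (u (k+1)) p - L x (v (k+1)))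
        ≤ ∑ k ∈ Finset.range K, ((θ ^ k)⁻¹ * Δ k x p - (θ ^ (k+1))⁻¹ * Δ (k+1) x p) :=
          Finset.sum_le_sum hterm
      _ = (θ ^ 0)⁻¹ * Δ 0 x p - (θ ^ K)⁻¹ * Δ K x p :=
          Finset.sum_range_sub' (fun k => (θ ^ k)⁻¹ * Δ k x p) K
      _ = Δ 0 x p - (θ ^ K)⁻¹ * Δ K x p := by norm_num
  -- reindexing Icc 1 K to range K
  have hreidx : ∀ (K : ℕ) (f : ℕ → ℝ),
      ∑ k ∈ Finset.Icc 1 K, f k = ∑ i ∈ Finset.range K, f (i+1) := by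
    intro K f
    rw [← Finset.Ico_add_one_right_eq_Icc, Finset.sum_Ico_eq_sum_range]
    simp [Nat.add_comm]
  -- saddle point estimates
  have hLge : ∀ k : ℕ, 0 ≤ L (u (k+1)) ys - L xs (v (k+1)) := by
    intro k
    have h1 := hsaddle1 (v (k+1)) (hvS (k+1)).1
    have h2 := hsaddle2 (u (k+1)) (huS (k+1)).1
    linarith
  have hcontract : ∀ k : ℕ, Δ (k+1) xs ys ≤ θ * Δ k xs ys := by
    intro k
    have h := hstep k xs hxs ys hys
    nlinarith [mul_nonneg hθpos.le (hLge k)]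
  have hΔgeom : ∀ K : ℕ, Δ K xs ys ≤ θ ^ K * Δ 0 xs ys := by
    intro K
    induction K with
    | zero => simp
    | succ n ih =>
      calc Δ (n+1) xs ys ≤ θ * Δ n xs ys := hcontract n
        _ ≤ θ * (θ ^ n * Δ 0 xs ys) := mul_le_mul_of_nonneg_left ih hθpos.le
        _ = θ ^ (n+1) * Δ 0 xs ys := by ring
  have hΔlow : ∀ K : ℕ, (1/σ) * DY ys (v K) ≤ Δ K xs ys := by
    intro K
    rw [hΔdef]
    have hq0 : -(‖v K - v (K-1)‖ * (‖A‖ * ‖xs - u K‖)) ≤ (v K - v (K-1)) (A (xs - u K)) := by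
      have h0 : -((v K - v (K-1)) (A (xs - u K))) ≤ ‖(v K - v (K-1)) (A (xs - u K))‖ := by
        rw [Real.norm_eq_abs]; exact neg_le_abs _
      have h1 := (v K - v (K-1)).le_opNorm (A (xs - u K))
      have h2 : ‖A (xs - u K)‖ ≤ ‖A‖ * ‖xs - u K‖ := A.le_opNorm _
      nlinarith [norm_nonneg (v K - v (K-1))]
    have hsx := hscX xs hxs.2 (u K) (hu K).2
    have hsy := hscY (v K) ((hvS K).2) (v (K-1)) (hv (K-1)).2
    have hy := young_ineq (a := ‖xs - u K‖) (b := ‖v K - v (K-1)‖)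
      (show (0:ℝ) < 1/τ by positivity) (show (0:ℝ) ≤ θ * ‖A‖ by positivity)
      (show (θ * ‖A‖)^2 = (1/τ) * (θ/σ) by rw [mul_pow]; linarith [hcrs])
    have h6 := mul_le_mul_of_nonneg_left hsx (show (0:ℝ) ≤ 1/τ by positivity)
    have h7 := mul_le_mul_of_nonneg_left hsy (show (0:ℝ) ≤ θ/σ by positivity)
    have h8 := mul_le_mul_of_nonneg_left hq0 hθpos.le
    nlinarith [h6, h7, h8, hy]
  -- main conclusion
  intro K hK
  have hTpos : 0 < T K := by
    rw [hT]
    exact Finset.sum_pos (fun k _ => by positivity) (Finset.nonempty_Icc.mpr hK)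
  have hTne : T K ≠ 0 := ne_of_gt hTpos
  refine ⟨?_, ?_, ?_, ?_⟩
  · -- geometric sum formula
    obtain ⟨m, rfl⟩ : ∃ m, K = m + 1 := ⟨K - 1, by omega⟩
    rw [hT, hreidx]
    have hstep1 : ∀ i : ℕ, ((θ : ℝ) ^ ((i+1) - 1))⁻¹ = (θ⁻¹) ^ i := by
      intro i; rw [Nat.add_sub_cancel, inv_pow]
    simp only [hstep1]
    rw [geom_sum_eq (fun h => (ne_of_lt hθ1) (inv_eq_one.mp h) : θ⁻¹ ≠ 1)]
    rw [Nat.add_sub_cancel, inv_pow]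
    have hθpne : (θ : ℝ) ^ (m+1) ≠ 0 := pow_ne_zero _ hθne
    have h1θne : (1:ℝ) - θ ≠ 0 := by
      intro h; have : θ = 1 := by linarith
      exact (ne_of_lt hθ1) this
    field_simp
    ring
  · -- convergence rate
    intro x hx p hp
    have hw0 : ∀ k ∈ Finset.Icc 1 K, (0:ℝ) ≤ (T K)⁻¹ * ((θ : ℝ) ^ (k-1))⁻¹ :=
      fun k _ => by positivity
    have hw1 : ∑ k ∈ Finset.Icc 1 K, (T K)⁻¹ * ((θ : ℝ) ^ (k-1))⁻¹ = 1 := by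
      rw [← Finset.mul_sum, ← hT]
      exact inv_mul_cancel₀ hTne
    have hXKs : XK K = ∑ k ∈ Finset.Icc 1 K, ((T K)⁻¹ * ((θ : ℝ) ^ (k-1))⁻¹) • u k := by
      rw [hXK, Finset.smul_sum]
      exact Finset.sum_congr rfl fun k _ => smul_smul _ _ _
    have hYKs : YK K = ∑ k ∈ Finset.Icc 1 K, ((T K)⁻¹ * ((θ : ℝ) ^ (k-1))⁻¹) • v k := by
      rw [hYK, Finset.smul_sum]
      exact Finset.sum_congr rfl fun k _ => smul_smul _ _ _
    have hJg : g (XK K) ≤ ∑ k ∈ Finset.Icc 1 K, ((T K)⁻¹ * ((θ : ℝ) ^ (k-1))⁻¹) * g (u k) := by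
      rw [hXKs]
      simpa [smul_eq_mul] using hgconv.map_sum_le hw0 hw1 (fun k _ => (hu k).1)
    have hJh : hst (YK K) ≤ ∑ k ∈ Finset.Icc 1 K, ((T K)⁻¹ * ((θ : ℝ) ^ (k-1))⁻¹) * hst (v k) := by
      rw [hYKs]
      simpa [smul_eq_mul] using hhconv.map_sum_le hw0 hw1 (fun k _ => (hv k).1)
    have b1 : T K * g (XK K) ≤ ∑ k ∈ Finset.Icc 1 K, ((θ : ℝ) ^ (k-1))⁻¹ * g (u k) := by
      calc T K * g (XK K)
          ≤ T K * ∑ k ∈ Finset.Icc 1 K, ((T K)⁻¹ * ((θ : ℝ) ^ (k-1))⁻¹) * g (u k) :=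
            mul_le_mul_of_nonneg_left hJg hTpos.le
        _ = ∑ k ∈ Finset.Icc 1 K, ((θ : ℝ) ^ (k-1))⁻¹ * g (u k) := by
            rw [Finset.mul_sum]
            exact Finset.sum_congr rfl fun k _ => by field_simp
    have b2 : T K * hst (YK K) ≤ ∑ k ∈ Finset.Icc 1 K, ((θ : ℝ) ^ (k-1))⁻¹ * hst (v k) := by
      calc T K * hst (YK K)
          ≤ T K * ∑ k ∈ Finset.Icc 1 K, ((T K)⁻¹ * ((θ : ℝ) ^ (k-1))⁻¹) * hst (v k) :=
            mul_le_mul_of_nonneg_left hJh hTpos.le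
        _ = ∑ k ∈ Finset.Icc 1 K, ((θ : ℝ) ^ (k-1))⁻¹ * hst (v k) := by
            rw [Finset.mul_sum]
            exact Finset.sum_congr rfl fun k _ => by field_simp
    have e3 : T K * (p (A (XK K))) = ∑ k ∈ Finset.Icc 1 K, ((θ : ℝ) ^ (k-1))⁻¹ * (p (A (u k))) := by
      rw [hXKs, map_sum, map_sum, Finset.mul_sum]
      refine Finset.sum_congr rfl fun k _ => ?_
      rw [map_smul, map_smul, smul_eq_mul]
      field_simp
    have e4 : T K * ((YK K) (A x)) = ∑ k ∈ Finset.Icc 1 K, ((θ : ℝ) ^ (k-1))⁻¹ * ((v k) (A x)) := by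
      rw [hYKs, ContinuousLinearMap.sum_apply, Finset.mul_sum]
      refine Finset.sum_congr rfl fun k _ => ?_
      rw [ContinuousLinearMap.smul_apply, smul_eq_mul]
      field_simp
    have e5 : T K * hst p = ∑ k ∈ Finset.Icc 1 K, ((θ : ℝ) ^ (k-1))⁻¹ * hst p := by
      rw [hT, Finset.sum_mul]
    have e6 : T K * g x = ∑ k ∈ Finset.Icc 1 K, ((θ : ℝ) ^ (k-1))⁻¹ * g x := by
      rw [hT, Finset.sum_mul]
    have e7 : ∑ k ∈ Finset.Icc 1 K, ((θ : ℝ) ^ (k-1))⁻¹ * (L (u k) p - L x (v k))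
        = (∑ k ∈ Finset.Icc 1 K, ((θ : ℝ) ^ (k-1))⁻¹ * g (u k))
          + (∑ k ∈ Finset.Icc 1 K, ((θ : ℝ) ^ (k-1))⁻¹ * (p (A (u k))))
          - (∑ k ∈ Finset.Icc 1 K, ((θ : ℝ) ^ (k-1))⁻¹ * hst p)
          - (∑ k ∈ Finset.Icc 1 K, ((θ : ℝ) ^ (k-1))⁻¹ * g x)
          - (∑ k ∈ Finset.Icc 1 K, ((θ : ℝ) ^ (k-1))⁻¹ * ((v k) (A x)))
          + (∑ k ∈ Finset.Icc 1 K, ((θ : ℝ) ^ (k-1))⁻¹ * hst (v k)) := by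
      rw [← Finset.sum_add_distrib, ← Finset.sum_sub_distrib, ← Finset.sum_sub_distrib,
        ← Finset.sum_sub_distrib, ← Finset.sum_add_distrib]
      exact Finset.sum_congr rfl fun k _ => by rw [hLdef, hLdef]; ring
    have key2 : T K * (L (XK K) p - L x (YK K))
        ≤ ∑ k ∈ Finset.Icc 1 K, ((θ : ℝ) ^ (k-1))⁻¹ * (L (u k) p - L x (v k)) := by
      rw [hLdef, hLdef, e7]
      linarith [b1, b2, e3, e4, e5, e6]
    have hre : ∑ k ∈ Finset.Icc 1 K, ((θ : ℝ) ^ (k-1))⁻¹ * (L (u k) p - L x (v k))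
        = ∑ i ∈ Finset.range K, ((θ : ℝ) ^ ((i+1)-1))⁻¹ * (L (u (i+1)) p - L x (v (i+1))) :=
      hreidx K (fun k => ((θ : ℝ) ^ (k-1))⁻¹ * (L (u k) p - L x (v k)))
    have hconv : ∑ i ∈ Finset.range K, ((θ : ℝ) ^ ((i+1)-1))⁻¹ * (L (u (i+1)) p - L x (v (i+1)))
        = ∑ i ∈ Finset.range K, ((θ : ℝ) ^ i)⁻¹ * (L (u (i+1)) p - L x (v (i+1))) :=
      Finset.sum_congr rfl fun i _ => by rw [Nat.add_sub_cancel]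
    have hs := hsum x hx p hp K
    have hdiv : Δ K x p / θ ^ K = (θ ^ K)⁻¹ * Δ K x p := div_eq_inv_mul _ _
    rw [hdiv]
    calc T K * (L (XK K) p - L x (YK K))
        ≤ ∑ k ∈ Finset.Icc 1 K, ((θ : ℝ) ^ (k-1))⁻¹ * (L (u k) p - L x (v k)) := key2
      _ = ∑ i ∈ Finset.range K, ((θ : ℝ) ^ i)⁻¹ * (L (u (i+1)) p - L x (v (i+1))) := by
          rw [hre, hconv]
      _ ≤ Δ 0 x p - (θ ^ K)⁻¹ * Δ K x p := hs
  · exact hΔlow K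
  · exact hΔgeom K
end
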